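/- Fix vectors a, c ∈ ℂⁿ and signs δ₁, …, δₙ ∈ {+1, −1}, and let K = diag(δ₁, …, δₙ, 1) ∈ M_{n+1}(ℂ). Set V₀(λ) = −2iλ²Σ + 2λQ(a) − i Q(c) Σ − i Q(a)² Σ. Then K V₀(−λ) = V₀(λ) K holds for all λ ∈ ℂ if and only if for every index j one has: aⱼ = 0 whenever δⱼ = +1, and cⱼ = 0 whenever δⱼ = −1. In particular, for a field r(x,t), the constant diagonal boundary matrix K satisfies K V(−λ)|_{x=0} = V(λ)|_{x=0} K for all λ and t if and only if each component of r satisfies either the Dirichlet condition rⱼ(0,t) = 0 (when δⱼ = +1) or the Neumann condition ∂ₓrⱼ(0,t) = 0 (when δⱼ = −1); this includes the mixed Neumann/Dirichlet boundary conditions in which one component satisfies the Neumann condition and all others the Dirichlet condition. -/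

import Mathlib

open Complex Matrix

noncomputable section

def pdx (f : ℝ × ℝ → ℂ) : ℝ × ℝ → ℂ := fun p => deriv (fun x => f (x, p.2)) p.1

def Sig (n : ℕ) : Matrix (Fin (n+1)) (Fin (n+1)) ℂ :=
  Matrix.diagonal (fun i => if i = Fin.last n then -1 else 1)

def Qm {n : ℕ} (a : Fin n → ℂ) : Matrix (Fin (n+1)) (Fin (n+1)) ℂ :=
  Matrix.of fun i j =>
    if hi : i = Fin.last n then
      (if hj : j = Fin.last n then 0 else -(starRingEnd ℂ) (a (j.castPred hj)))
    else
      (if _ : j = Fin.last n then a (i.castPred hi) else 0)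

/-- The `t`-part of the Lax pair at the boundary, built from `a = r(0,t)` and `c = ∂ₓr(0,t)`. -/
def V0 {n : ℕ} (a c : Fin n → ℂ) (lam : ℂ) : Matrix (Fin (n+1)) (Fin (n+1)) ℂ :=
  (-2 * Complex.I * lam ^ 2) • Sig n + (2 * lam) • Qm a
    - Complex.I • (Qm c * Sig n) - Complex.I • (Qm a * Qm a * Sig n)

/-- The diagonal boundary matrix `K = diag(δ₁, …, δₙ, 1)`. -/
def KmND {n : ℕ} (δ : Fin n → ℝ) : Matrix (Fin (n+1)) (Fin (n+1)) ℂ :=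
  Matrix.diagonal (fun i => if h : i = Fin.last n then 1 else (δ (i.castPred h) : ℂ))

/-! Split `V₀(λ) = E(λ) + 2λ Q(a)` with `E(λ) = −2iλ²Σ − i(Q(c) + Q(a)²)Σ` even in `λ`. As `K` and
`Σ` are diagonal they commute, so `K V₀(−λ) = V₀(λ) K` for all `λ` says exactly that `K` anticommutes
with `Q(a)` and commutes with `Q(c)`; anticommuting with `Q(a)` already makes `K` commute with `Q(a)²`.
The nonzero entries of `Q(a)` lie in the last row and column, so these two conditions read
`(δⱼ + 1) aⱼ = 0` and `(δⱼ − 1) cⱼ = 0`. -/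

lemma commute_mul_self_of_mul_eq_neg {R : Type*} [Semigroup R] [HasDistribNeg R] {K A : R}
    (h : K * A = -(A * K)) : Commute K (A * A) := by
  calc K * (A * A) = K * A * A := (mul_assoc _ _ _).symm
    _ = -(A * K) * A := by rw [h]
    _ = -(A * (K * A)) := by rw [neg_mul, mul_assoc]
    _ = A * A * K := by rw [h, mul_neg, neg_neg, mul_assoc]

section LaxAlgebra

variable {R : Type*} [Ring R] [Algebra ℂ R]

def laxV (S A C : R) (lam : ℂ) : R :=
  (-2 * Complex.I * lam ^ 2) • S + (2 * lam) • A - Complex.I • (C * S) - Complex.I • (A * A * S)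

lemma laxV_neg (S A C : R) (lam : ℂ) :
    laxV S A C (-lam) = laxV S A C lam - (4 * lam) • A := by
  simp only [laxV]
  module

lemma laxV_zero (S A C : R) : laxV S A C 0 = (-Complex.I) • ((C + A * A) * S) := by
  simp [laxV, add_mul, smul_add, sub_eq_add_neg]

theorem laxV_reflection_iff {K S A C : R} (hKS : Commute K S) (hS : IsUnit S) :
    (∀ lam : ℂ, K * laxV S A C (-lam) = laxV S A C lam * K) ↔
      K * A = -(A * K) ∧ Commute K C := by
  constructor
  · intro H
    have hW : laxV S A C (-(1 / 4)) = laxV S A C (1 / 4) - A := by rw [laxV_neg]; norm_num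
    have h₁ := H (1 / 4)
    have h₂ := H (-(1 / 4))
    rw [neg_neg] at h₂
    rw [hW] at h₁ h₂
    generalize laxV S A C (1 / 4) = W at h₁ h₂
    have hA : K * A = -(A * K) := by
      calc K * A = K * W - W * K := by rw [← h₁]; noncomm_ring
        _ = -(A * K) := by rw [h₂]; noncomm_ring
    refine ⟨hA, ?_⟩
    have h₀ : Commute K ((C + A * A) * S) := by
      have := H 0
      rwa [neg_zero, laxV_zero, mul_smul_comm, smul_mul_assoc,
        smul_right_inj (neg_ne_zero.mpr Complex.I_ne_zero)] at this
    have hCS : Commute K (C * S) := by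
      simpa [add_mul] using h₀.sub_right ((commute_mul_self_of_mul_eq_neg hA).mul_right hKS)
    obtain ⟨u, rfl⟩ := hS
    simpa using hCS.mul_right hKS.units_inv_right
  · rintro ⟨hA, hC⟩ lam
    have hE : Commute K ((-2 * Complex.I * lam ^ 2) • S - Complex.I • (C * S)
        - Complex.I • (A * A * S)) :=
      ((hKS.smul_right _).sub_right ((hC.mul_right hKS).smul_right _)).sub_right
        (((commute_mul_self_of_mul_eq_neg hA).mul_right hKS).smul_right _)
    calc K * laxV S A C (-lam)
        = K * ((-2 * Complex.I * lam ^ 2) • S - Complex.I • (C * S)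
            - Complex.I • (A * A * S)) - (2 * lam) • (K * A) := by
          simp only [laxV, mul_sub, mul_add, mul_smul_comm]; module
      _ = laxV S A C lam * K := by
          rw [hE.eq, hA]; simp only [laxV, sub_mul, add_mul, smul_mul_assoc]; module

end LaxAlgebra

section BoundaryMatrices

variable {n : ℕ}

@[simp] lemma Qm_castSucc_castSucc (a : Fin n → ℂ) (i j : Fin n) :
    Qm a i.castSucc j.castSucc = 0 := by
  simp [Qm, Fin.castSucc_ne_last]

@[simp] lemma Qm_castSucc_last (a : Fin n → ℂ) (i : Fin n) :
    Qm a i.castSucc (Fin.last n) = a i := by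
  simp [Qm, Fin.castSucc_ne_last]

@[simp] lemma Qm_last_castSucc (a : Fin n → ℂ) (j : Fin n) :
    Qm a (Fin.last n) j.castSucc = -(starRingEnd ℂ) (a j) := by
  simp [Qm, Fin.castSucc_ne_last]

@[simp] lemma Qm_last_last (a : Fin n → ℂ) : Qm a (Fin.last n) (Fin.last n) = 0 := by
  simp [Qm]

lemma KmND_eq_diagonal (δ : Fin n → ℝ) :
    KmND δ = Matrix.diagonal (Fin.lastCases 1 fun i => (δ i : ℂ)) := by
  unfold KmND
  congr 1
  funext i
  induction i using Fin.lastCases with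
  | last => simp
  | cast i => simp [Fin.castSucc_ne_last]

lemma commute_KmND_Sig (δ : Fin n → ℝ) : Commute (KmND δ) (Sig n) := by
  rw [KmND, Sig]; exact Matrix.commute_diagonal _ _

lemma Sig_mul_self : Sig n * Sig n = 1 := by
  rw [Sig, Matrix.diagonal_mul_diagonal, ← Matrix.diagonal_one]
  congr 1; ext i; split_ifs <;> norm_num

lemma KmND_mul_Qm_eq_smul_iff (δ : Fin n → ℝ) (a : Fin n → ℂ) {s : ℝ} (hs : s * s = 1) :
    KmND δ * Qm a = (s : ℂ) • (Qm a * KmND δ) ↔ ∀ j, ((δ j : ℂ) - s) * a j = 0 := by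
  have hs' : (s : ℂ) * s = 1 := by exact_mod_cast hs
  simp only [KmND_eq_diagonal, ← Matrix.ext_iff, Fin.forall_fin_succ', Matrix.diagonal_mul,
    Matrix.mul_diagonal, Matrix.smul_apply, smul_eq_mul, Fin.lastCases_castSucc, Fin.lastCases_last,
    Qm_castSucc_castSucc, Qm_castSucc_last, Qm_last_castSucc, Qm_last_last, mul_zero, zero_mul,
    mul_one, one_mul, and_true, implies_true, true_and]
  constructor
  · intro h j
    linear_combination (h.1 j)
  · intro h
    refine ⟨fun i => by linear_combination h i, fun j => ?_⟩
    have hc := congrArg (starRingEnd ℂ) (h j)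
    simp only [map_mul, map_sub, Complex.conj_ofReal, map_zero] at hc
    linear_combination (s : ℂ) * hc + (starRingEnd ℂ) (a j) * hs'

end BoundaryMatrices

lemma V0_eq_laxV {n : ℕ} (a c : Fin n → ℂ) (lam : ℂ) :
    V0 a c lam = laxV (Sig n) (Qm a) (Qm c) lam := rfl

theorem KmND_V0_reflection_iff {n : ℕ} {δ : Fin n → ℝ} (hδ : ∀ j, δ j = 1 ∨ δ j = -1)
    (a c : Fin n → ℂ) :
    (∀ lam : ℂ, KmND δ * V0 a c (-lam) = V0 a c lam * KmND δ)
      ↔ ∀ j, (δ j = 1 → a j = 0) ∧ (δ j = -1 → c j = 0) := by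
  have hanti := KmND_mul_Qm_eq_smul_iff δ a (s := -1) (by norm_num)
  have hcomm := KmND_mul_Qm_eq_smul_iff δ c (s := 1) (by norm_num)
  push_cast [neg_one_smul, one_smul, sub_neg_eq_add] at hanti hcomm
  simp only [V0_eq_laxV, laxV_reflection_iff (commute_KmND_Sig δ)
    (IsUnit.of_mul_eq_one _ Sig_mul_self), commute_iff_eq, hanti, hcomm, ← forall_and]
  refine forall_congr' fun j => ?_
  rcases hδ j with h | h <;> norm_num [h]

theorem stmt6 {n : ℕ} (δ : Fin n → ℝ) (hδ : ∀ j, δ j = 1 ∨ δ j = -1)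
    (a c : Fin n → ℂ) :
    ((∀ lam : ℂ, KmND δ * V0 a c (-lam) = V0 a c lam * KmND δ)
      ↔ ∀ j, (δ j = 1 → a j = 0) ∧ (δ j = -1 → c j = 0)) ∧
    ∀ r : ℝ × ℝ → Fin n → ℂ,
      ((∀ (t : ℝ) (lam : ℂ),
          KmND δ * V0 (r (0, t)) (fun ℓ => pdx (fun q => r q ℓ) (0, t)) (-lam)
            = V0 (r (0, t)) (fun ℓ => pdx (fun q => r q ℓ) (0, t)) lam * KmND δ)
        ↔ ∀ j, (δ j = 1 → ∀ t : ℝ, r (0, t) j = 0) ∧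
            (δ j = -1 → ∀ t : ℝ, pdx (fun q => r q j) (0, t) = 0)) := by
  refine ⟨KmND_V0_reflection_iff hδ a c, fun r => ?_⟩
  simp only [KmND_V0_reflection_iff hδ]
  exact ⟨fun h j => ⟨fun hj t => (h t j).1 hj, fun hj t => (h t j).2 hj⟩,
    fun h t j => ⟨fun hj => (h j).1 hj t, fun hj => (h j).2 hj t⟩⟩
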